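/- For n ≥ 1 and p ≥ 0: ∑_{k=0}^{n} k^p (-1)^k / C(n,k) = ((n+1)/(n+2)) · [(-1)^{n+p} B_{p,n+1}(-n) + B_{p,n+1}], where C(n,k) is the binomial coefficient. -/

import Mathlib

def pBernoulli : ℕ → ℕ → ℚ
  | 0, _ => 1
  | n + 1, p => p * pBernoulli n p - ((p + 1 : ℚ) ^ 2 / (p + 2)) * pBernoulli n (p + 1)

/-- The p-Bernoulli polynomials `B_{n,p}(x) = ∑ C(n,k) x^{n-k} B_{k,p}`. -/
def pBernoulliPoly (n p : ℕ) (x : ℚ) : ℚ :=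
  ∑ k ∈ Finset.range (n + 1), (n.choose k : ℚ) * x ^ (n - k) * pBernoulli k p

/-!
Splitting `1 / C(n,k) = (n+1)/(n+2) · (1 / C(n+1,k) + 1 / C(n+1,k+1))` and reindexing the second
half (expanding `(k-1)^p` binomially) expresses the sum for `(n, p)` through the sums for
`(n+1, i)` with `i < p`. The closed form obeys the same recursion thanks to the identity
`B_{p,q}(x) = (x-1)^p + (q+1)/(q+2) · (B_{p,q+1}(x) - B_{p,q+1}(x-1))`, proved by induction on `p`
from `B_{p+1,q}(x) = (x+q) B_{p,q}(x) - (q+1)^2/(q+2) B_{p,q+1}(x)`, together with the Appell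
property `B_{p,q}(x+y) = ∑ C(p,i) y^{p-i} B_{i,q}(x)`.
-/

open Finset

section Appell

variable {R : Type*} [CommSemiring R]

def appell (b : ℕ → R) (p : ℕ) (x : R) : R :=
  ∑ k ∈ range (p + 1), (p.choose k : R) * x ^ (p - k) * b k

theorem appell_zero_left (b : ℕ → R) (x : R) : appell b 0 x = b 0 := by
  simp [appell]

theorem appell_zero_right (b : ℕ → R) (p : ℕ) : appell b p 0 = b p := by
  rw [appell, sum_range_succ, sum_eq_zero fun k hk => ?_]
  · simp
  · rw [zero_pow (Nat.sub_ne_zero_of_lt (mem_range.mp hk)), mul_zero, zero_mul]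

theorem appell_succ (b : ℕ → R) (p : ℕ) (x : R) :
    appell b (p + 1) x = x * appell b p x + appell (fun k => b (k + 1)) p x := by
  have := sum_choose_succ_mul (fun k j => x ^ j * b k) p
  simp only [← mul_assoc] at this
  rw [appell, this, appell, appell, mul_sum]
  congr 1
  refine sum_congr rfl fun k hk => ?_
  rw [Nat.sub_add_comm (Nat.lt_succ_iff.mp (mem_range.mp hk)), pow_succ]
  ring

theorem appell_add (b : ℕ → R) (p : ℕ) (x y : R) :
    appell b p (x + y) = ∑ i ∈ range (p + 1), (p.choose i : R) * y ^ (p - i) * appell b i x := by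
  induction p generalizing b with
  | zero => simp [appell_zero_left]
  | succ p ih =>
    have := sum_choose_succ_mul (fun i j => y ^ j * appell b i x) p
    simp only [← mul_assoc] at this
    rw [this, appell_succ, ih, ih, add_mul, mul_sum, mul_sum]
    simp only [appell_succ, mul_add, sum_add_distrib.symm]
    refine sum_congr rfl fun k hk => ?_
    rw [Nat.sub_add_comm (Nat.lt_succ_iff.mp (mem_range.mp hk)), pow_succ]
    ring

end Appell

theorem pBernoulliPoly_eq_appell (p q : ℕ) (x : ℚ) :
    pBernoulliPoly p q x = appell (fun k => pBernoulli k q) p x := rfl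

theorem pBernoulliPoly_zero_right (p q : ℕ) : pBernoulliPoly p q 0 = pBernoulli p q :=
  appell_zero_right _ p

theorem pBernoulliPoly_succ (p q : ℕ) (x : ℚ) :
    pBernoulliPoly (p + 1) q x = (x + q) * pBernoulliPoly p q x
      - (q + 1) ^ 2 / (q + 2) * pBernoulliPoly p (q + 1) x := by
  rw [pBernoulliPoly_eq_appell, appell_succ]
  simp only [appell, pBernoulliPoly, pBernoulli, mul_sum, ← sum_add_distrib, ← sum_sub_distrib]
  refine sum_congr rfl fun k _ => by ring

theorem pBernoulliPoly_eq_sub_one_pow_add (p q : ℕ) (x : ℚ) :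
    pBernoulliPoly p q x = (x - 1) ^ p
      + (q + 1) / (q + 2) * (pBernoulliPoly p (q + 1) x - pBernoulliPoly p (q + 1) (x - 1)) := by
  induction p generalizing q with
  | zero => simp [pBernoulliPoly, pBernoulli]
  | succ p ih =>
    have h1 := ih q
    have h2 := ih (q + 1)
    push_cast at h2
    rw [pBernoulliPoly_succ p q x, pBernoulliPoly_succ p (q + 1) x,
      pBernoulliPoly_succ p (q + 1) (x - 1)]
    push_cast
    have hq2 : (q : ℚ) + 2 ≠ 0 := by positivity
    have hq3 : (q : ℚ) + 1 + 2 ≠ 0 := by positivity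
    linear_combination (norm := skip) (x + q) * h1 - (q + 1) * h2
    field_simp
    ring

theorem inv_choose_eq_mul_add_inv_choose_succ {n k : ℕ} (hk : k ≤ n) :
    (n.choose k : ℚ)⁻¹
      = (n + 1) / (n + 2) * (((n + 1).choose k : ℚ)⁻¹ + ((n + 1).choose (k + 1) : ℚ)⁻¹) := by
  have h1 : (n.choose k : ℚ) * (n + 1) = (n + 1).choose k * (n + 1 - k) := by
    have := congrArg (Nat.cast : ℕ → ℚ) (Nat.choose_mul_succ_eq n k)
    push_cast [Nat.cast_sub (by omega : k ≤ n + 1)] at this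
    exact this
  have h2 : ((n : ℚ) + 1) * n.choose k = (n + 1).choose (k + 1) * (k + 1) := by
    exact_mod_cast Nat.add_one_mul_choose_eq n k
  have c0 : (n.choose k : ℚ) ≠ 0 := by exact_mod_cast (Nat.choose_pos hk).ne'
  have c1 : ((n + 1).choose k : ℚ) ≠ 0 := by exact_mod_cast (Nat.choose_pos (by omega)).ne'
  have c2 : ((n + 1).choose (k + 1) : ℚ) ≠ 0 := by exact_mod_cast (Nat.choose_pos (by omega)).ne'
  field_simp
  linear_combination -((n + 1).choose (k + 1) : ℚ) * h1 - ((n + 1).choose k : ℚ) * h2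

theorem sum_div_choose_eq_mul_sum_div_choose_succ (n : ℕ) (f : ℕ → ℚ) :
    ∑ k ∈ range (n + 1), f k / n.choose k
      = (n + 1) / (n + 2)
        * ∑ k ∈ range (n + 1), (f k / (n + 1).choose k + f k / (n + 1).choose (k + 1)) := by
  rw [mul_sum]
  refine sum_congr rfl fun k hk => ?_
  rw [div_eq_mul_inv, inv_choose_eq_mul_add_inv_choose_succ (Nat.lt_succ_iff.mp (mem_range.mp hk))]
  ring

def altPowInvChooseSum (n p : ℕ) : ℚ :=
  ∑ k ∈ range (n + 1), (k : ℚ) ^ p * (-1) ^ k / n.choose k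

theorem altPowInvChooseSum_succ (n p : ℕ) :
    altPowInvChooseSum (n + 1) p
      = ∑ k ∈ range (n + 1), (k : ℚ) ^ p * (-1) ^ k / (n + 1).choose k - (-1) ^ n * (n + 1) ^ p := by
  rw [altPowInvChooseSum, sum_range_succ, Nat.choose_self]
  push_cast
  ring

theorem sum_choose_mul_altPowInvChooseSum (n p : ℕ) :
    ∑ i ∈ range (p + 1), (p.choose i : ℚ) * (-1) ^ (p - i) * altPowInvChooseSum (n + 1) i
      = (-1) ^ p - ∑ k ∈ range (n + 1), (k : ℚ) ^ p * (-1) ^ k / (n + 1).choose (k + 1) := by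
  have hexpand (j : ℕ) :
      ((j : ℚ) - 1) ^ p = ∑ i ∈ range (p + 1), (p.choose i : ℚ) * (-1) ^ (p - i) * j ^ i := by
    rw [sub_eq_add_neg, add_pow]
    exact sum_congr rfl fun i _ => by ring
  calc _ = ∑ j ∈ range (n + 2), ((j : ℚ) - 1) ^ p * (-1) ^ j / (n + 1).choose j := by
        simp only [altPowInvChooseSum, hexpand, mul_sum, sum_mul, sum_div]
        rw [sum_comm]
        exact sum_congr rfl fun j _ => sum_congr rfl fun i _ => by ring
    _ = _ := by
        rw [sum_range_succ']
        push_cast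
        simp only [add_sub_cancel_right, pow_succ, mul_neg, mul_one, neg_div, sum_neg_distrib,
          zero_sub, pow_zero, Nat.choose_zero_right, Nat.cast_one, div_one]
        ring

theorem altPowInvChooseSum_eq_sum_succ (n p : ℕ) :
    altPowInvChooseSum n p = (n + 1) / (n + 2) * ((-1) ^ n * (n + 1) ^ p + (-1) ^ p
      - ∑ i ∈ range p, (p.choose i : ℚ) * (-1) ^ (p - i) * altPowInvChooseSum (n + 1) i) := by
  have hsucc := altPowInvChooseSum_succ n p
  have hsum := sum_choose_mul_altPowInvChooseSum n p
  rw [sum_range_succ, Nat.choose_self, Nat.sub_self] at hsum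
  rw [altPowInvChooseSum, sum_div_choose_eq_mul_sum_div_choose_succ, sum_add_distrib]
  linear_combination (n + 1) / (n + 2) * (hsum - hsucc)

theorem pBernoulliPoly_add_sub (p q : ℕ) (x y : ℚ) :
    pBernoulliPoly p q (x + y) - pBernoulliPoly p q x
      = ∑ i ∈ range p, (p.choose i : ℚ) * y ^ (p - i) * pBernoulliPoly i q x := by
  rw [pBernoulliPoly_eq_appell, appell_add, sum_range_succ]
  simp [pBernoulliPoly_eq_appell]

theorem altPowInvChooseSum_eq_pBernoulli (p n : ℕ) :
    altPowInvChooseSum n p = (n + 1) / (n + 2)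
      * ((-1) ^ (n + p) * pBernoulliPoly p (n + 1) (-n) + pBernoulli p (n + 1)) := by
  induction p using Nat.strong_induction_on generalizing n with
  | _ p ih =>
  set c : ℚ := (n + 2) / (n + 3)
  have hsum : ∑ i ∈ range p, (p.choose i : ℚ) * (-1) ^ (p - i) * altPowInvChooseSum (n + 1) i
      = c * ((-1) ^ (n + 1 + p)
          * (pBernoulliPoly p (n + 2) (-n) - pBernoulliPoly p (n + 2) (-n - 1))
        + (pBernoulliPoly p (n + 2) (-1) - pBernoulliPoly p (n + 2) 0)) := by
    have hshift₁ := pBernoulliPoly_add_sub p (n + 2) (-n - 1) 1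
    have hshift₀ := pBernoulliPoly_add_sub p (n + 2) 0 (-1)
    rw [sub_add_cancel] at hshift₁
    rw [zero_add] at hshift₀
    rw [hshift₁, hshift₀, mul_sum, ← sum_add_distrib, mul_sum]
    refine sum_congr rfl fun i hi => ?_
    have hsign : (-1 : ℚ) ^ (p - i) * (-1) ^ (n + 1 + i) = (-1) ^ (n + 1 + p) := by
      rw [← pow_add]
      congr 1
      have := mem_range.mp hi
      omega
    rw [ih i (mem_range.mp hi) (n + 1), ← pBernoulliPoly_zero_right]
    push_cast
    rw [show -((n : ℚ) + 1) = -n - 1 by ring]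
    linear_combination (c * (p.choose i) * pBernoulliPoly i (n + 2) (-n - 1)) * hsign
  have hx := pBernoulliPoly_eq_sub_one_pow_add p (n + 1) (-n)
  have h0 := pBernoulliPoly_eq_sub_one_pow_add p (n + 1) 0
  rw [pBernoulliPoly_zero_right, zero_sub] at h0
  push_cast at hx h0
  rw [show (-n - 1 : ℚ) ^ p = (-1) ^ p * (n + 1) ^ p by rw [← mul_pow]; ring_nf] at hx
  have hsq : ((-1 : ℚ) ^ p) * (-1) ^ p = 1 := by rw [← mul_pow]; norm_num
  rw [altPowInvChooseSum_eq_sum_succ, hsum, pow_add, pow_add, pow_add]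
  linear_combination (-((n + 1) / (n + 2)) * (-1) ^ n * (-1) ^ p) * hx - (n + 1) / (n + 2) * h0
    - (n + 1) / (n + 2) * (-1) ^ n * (n + 1) ^ p * hsq

theorem faulhaber_type_sum_general (n p : ℕ) :
    ∑ k ∈ Finset.range (n + 1), (k : ℚ) ^ p * (-1) ^ k / (n.choose k : ℚ)
      = ((n + 1 : ℚ) / (n + 2))
        * ((-1) ^ (n + p) * pBernoulliPoly p (n + 1) (-(n : ℚ)) + pBernoulli p (n + 1)) :=
  altPowInvChooseSum_eq_pBernoulli p n

theorem faulhaber_type_sum (n p : ℕ) (hn : 1 ≤ n) :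
    ∑ k ∈ Finset.range (n + 1), (k : ℚ) ^ p * (-1) ^ k / (n.choose k : ℚ)
      = ((n + 1 : ℚ) / (n + 2))
        * ((-1) ^ (n + p) * pBernoulliPoly p (n + 1) (-(n : ℚ)) + pBernoulli p (n + 1)) :=
  faulhaber_type_sum_general n p
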